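/- Let σ: ℝ^L → ℝ^L be odd, i.e. σ(−x) = −σ(x) for all x. Consider the reparameterized population risk on the manifold Ẽ_σ(m_k, m_v, R_k, R_v) = E_{ε,χ,ξ} g(ε,χ)[1 − 2 m_v σ(m_k χ + R_k ξ)_ε + (m_v² + R_v²) ‖σ(m_k χ + R_k ξ)‖²], with ε uniform on {1,...,L} and χ, ξ ~ N(0, I_L) independent, for any measurable positive weight g with E g = 1. Then the partial derivatives of Ẽ_σ with respect to m_k and m_v both vanish at (m_k, m_v, R_k, R_v) = (0, 0, 1, 1). -/

import Mathlib

open MeasureTheory ProbabilityTheory Real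

noncomputable def stdGaussian (L : ℕ) : Measure (Fin L → ℝ) :=
  Measure.pi fun _ => gaussianReal 0 1

/-- Reparameterized population risk on the manifold:
`Ẽ_σ(m_k, m_v, R_k, R_v) = E_{ε,χ,ξ} g(ε,χ)[1 − 2 m_v σ(m_k χ + R_k ξ)_ε
  + (m_v² + R_v²) ‖σ(m_k χ + R_k ξ)‖²]`. -/
noncomputable def Etil (L : ℕ) (g : Fin L → (Fin L → ℝ) → ℝ)
    (σ : (Fin L → ℝ) → (Fin L → ℝ)) (mk mv Rk Rv : ℝ) : ℝ :=
  (L : ℝ)⁻¹ * ∑ ε : Fin L, ∫ χ, ∫ ξ,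
    g ε χ * (1 - 2 * mv * σ (fun ℓ => mk * χ ℓ + Rk * ξ ℓ) ε
      + (mv ^ 2 + Rv ^ 2) * ∑ ℓ, σ (fun ℓ' => mk * χ ℓ' + Rk * ξ ℓ') ℓ ^ 2)
    ∂stdGaussian L ∂stdGaussian L

/-!
Replacing `ξ` by `-ξ` leaves the Gaussian law of `ξ` unchanged, so `Ẽ_σ` is even in `R_k`;
oddness of `σ` makes `Ẽ_σ` invariant under `(m_k, m_v, R_k) ↦ (-m_k, -m_v, -R_k)`. Together,
`Ẽ_σ` is even in `(m_k, m_v)` jointly, so each of its restrictions to the lines `m_v = 0` and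
`m_k = 0` is an even function, whose derivative at `0` vanishes.
-/

theorem Function.Even.deriv_odd {𝕜 F : Type*} [NontriviallyNormedField 𝕜] [NormedAddCommGroup F]
    [NormedSpace 𝕜 F] {f : 𝕜 → F} (hf : f.Even) : (deriv f).Odd := fun x => by
  simpa [hf.eq] using deriv_comp_neg (f := f) (x := -x)

instance gaussianReal_zero_isNegInvariant (v : NNReal) : (gaussianReal 0 v).IsNegInvariant :=
  ⟨(gaussianReal_map_neg (μ := 0) (v := v)).trans (by rw [neg_zero])⟩

instance stdGaussian_isNegInvariant (L : ℕ) : (stdGaussian L).IsNegInvariant :=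
  Measure.pi.isNegInvariant _

theorem Etil_neg_Rk (L : ℕ) (g : Fin L → (Fin L → ℝ) → ℝ) (σ : (Fin L → ℝ) → (Fin L → ℝ))
    (mk mv Rk Rv : ℝ) : Etil L g σ mk mv (-Rk) Rv = Etil L g σ mk mv Rk Rv := by
  unfold Etil
  congr 1
  refine Finset.sum_congr rfl fun ε _ => integral_congr_ae (.of_forall fun χ => ?_)
  dsimp only
  rw [← integral_neg_eq_self]
  simp only [Pi.neg_apply, mul_neg, neg_mul, neg_neg]

theorem Etil_neg_neg_neg_of_odd (L : ℕ) (g : Fin L → (Fin L → ℝ) → ℝ)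
    {σ : (Fin L → ℝ) → (Fin L → ℝ)} (hσ : σ.Odd) (mk mv Rk Rv : ℝ) :
    Etil L g σ (-mk) (-mv) (-Rk) Rv = Etil L g σ mk mv Rk Rv := by
  have hσ' (χ ξ : Fin L → ℝ) : σ (fun ℓ => -(mk * χ ℓ) + -(Rk * ξ ℓ))
      = -σ (fun ℓ => mk * χ ℓ + Rk * ξ ℓ) := by
    rw [← hσ.eq]; congr 1; funext ℓ; simp only [Pi.neg_apply]; ring
  simp only [Etil, neg_mul, hσ', Pi.neg_apply, neg_sq, mul_neg, neg_neg]

theorem Etil_neg_neg_of_odd (L : ℕ) (g : Fin L → (Fin L → ℝ) → ℝ)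
    {σ : (Fin L → ℝ) → (Fin L → ℝ)} (hσ : σ.Odd) (mk mv Rk Rv : ℝ) :
    Etil L g σ (-mk) (-mv) Rk Rv = Etil L g σ mk mv Rk Rv := by
  rw [← Etil_neg_Rk, Etil_neg_neg_neg_of_odd L g hσ]

theorem stmt12_general (L : ℕ)
    (σ : (Fin L → ℝ) → (Fin L → ℝ))
    (hσ_odd : ∀ x : Fin L → ℝ, σ (-x) = -σ x)
    (g : Fin L → (Fin L → ℝ) → ℝ) :
    deriv (fun mk => Etil L g σ mk 0 1 1) 0 = 0 ∧
    deriv (fun mv => Etil L g σ 0 mv 1 1) 0 = 0 := by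
  have hEven_mk : Function.Even fun mk => Etil L g σ mk 0 1 1 := fun mk => by
    simpa using Etil_neg_neg_of_odd L g hσ_odd mk 0 1 1
  have hEven_mv : Function.Even fun mv => Etil L g σ 0 mv 1 1 := fun mv => by
    simpa using Etil_neg_neg_of_odd L g hσ_odd 0 mv 1 1
  exact ⟨hEven_mk.deriv_odd.map_zero, hEven_mv.deriv_odd.map_zero⟩

/-- for an odd activation `σ` the partial derivatives of the
reparameterized risk with respect to `m_k` and `m_v` both vanish at
`(m_k, m_v, R_k, R_v) = (0, 0, 1, 1)`. -/
theorem stmt12 (L : ℕ) (hL : 1 ≤ L)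
    (σ : (Fin L → ℝ) → (Fin L → ℝ))
    (hσ_meas : Measurable σ)
    (hσ_odd : ∀ x : Fin L → ℝ, σ (-x) = -σ x)
    (g : Fin L → (Fin L → ℝ) → ℝ)
    (hg_pos : ∀ ε χ, 0 < g ε χ)
    (hg_meas : ∀ ε, Measurable (g ε))
    (hg_norm : (L : ℝ)⁻¹ * ∑ ε, ∫ χ, g ε χ ∂stdGaussian L = 1) :
    deriv (fun mk => Etil L g σ mk 0 1 1) 0 = 0 ∧
    deriv (fun mv => Etil L g σ 0 mv 1 1) 0 = 0 :=
  stmt12_general L σ hσ_odd g
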